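/- If (C, ℓ) is an orthogonalizable Λ-space, then: (1) for every subspace W ≤ C, the pair (W, ℓ|_W) is an orthogonalizable Λ-space; (2) for subspaces V ≤ W ≤ C, any orthogonal ordered basis of V may be extended to an orthogonal ordered basis of W; (3) for every subspace U ≤ C there exists a subspace V ≤ C with U ⊕ V = C such that U and V are orthogonal (an orthogonal complement of U). -/

import Mathlib

/-!
Formalization setup following Usher–Zhang, "Persistent homology and Floer–Novikov theory".

We fix an additive subgroup `Γ ≤ ℝ` and abstract the Novikov field `Λ = Λ^{K,Γ}` as a field
`Λ` equipped with a valuation `ν : Λ → ℝ ∪ {∞}` (encoded in `EReal`, with `ν x = ⊤ ↔ x = 0`)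
satisfying (V1),(V2),(V3), whose values on nonzero elements lie in (and fill out) `Γ`.

Filtration functions `ℓ : C → ℝ ∪ {-∞}` are encoded as `EReal`-valued functions which never
take the value `⊤`, with `ℓ x = ⊥ ↔ x = 0`.
-/

noncomputable section

/-- The Novikov field `Λ^{K,Γ}` together with its valuation `ν(Σ a_g T^g) = min {g : a_g ≠ 0}`:
a field `Λ` with a function `ν : Λ → ℝ ∪ {∞}` such that (V1) `ν x = ∞ ↔ x = 0`,
(V2) `ν (xy) = ν x + ν y`, (V3) `ν (x+y) ≥ min (ν x) (ν y)`, and the values of `ν` on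
nonzero elements are exactly the elements of `Γ`. -/
structure NovikovStructure (Γ : AddSubgroup ℝ) (Λ : Type*) [Field Λ] where
  ν : Λ → EReal
  ν_eq_top_iff : ∀ x : Λ, ν x = ⊤ ↔ x = 0
  ν_mul : ∀ x y : Λ, ν (x * y) = ν x + ν y
  min_le_ν_add : ∀ x y : Λ, min (ν x) (ν y) ≤ ν (x + y)
  ν_mem : ∀ x : Λ, x ≠ 0 → ∃ g : Γ, ν x = ((g : ℝ) : EReal)
  ν_surj : ∀ g : Γ, ∃ x : Λ, ν x = ((g : ℝ) : EReal)

/-- `(C, ℓ)` is a non-Archimedean normed vector space over `Λ` (Definition 2.2):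
(F1) `ℓ x = -∞ ↔ x = 0`; (F2) `ℓ (λ • x) = ℓ x - ν λ`; (F3) `ℓ (x+y) ≤ max (ℓ x) (ℓ y)`. -/
structure IsNonArchNorm {Γ : AddSubgroup ℝ} {Λ : Type*} [Field Λ] (NS : NovikovStructure Γ Λ)
    {C : Type*} [AddCommGroup C] [Module Λ C] (ℓ : C → EReal) : Prop where
  eq_bot_iff : ∀ x : C, ℓ x = ⊥ ↔ x = 0
  ne_top : ∀ x : C, ℓ x ≠ ⊤
  smul_eq : ∀ (a : Λ) (x : C), ℓ (a • x) = ℓ x - NS.ν a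
  add_le : ∀ x y : C, ℓ (x + y) ≤ max (ℓ x) (ℓ y)

/-- A finite ordered family `(w i)` in `(C, ℓ)` is orthogonal:
`ℓ (∑ λᵢ • wᵢ) = maxᵢ ℓ (λᵢ • wᵢ)` for all coefficients `λᵢ ∈ Λ` (Definition 2.8). -/
def IsOrthFamily (Λ : Type*) [Field Λ] {C : Type*} [AddCommGroup C] [Module Λ C]
    (ℓ : C → EReal) {ι : Type*} [Fintype ι] (w : ι → C) : Prop :=
  ∀ a : ι → Λ, ℓ (∑ i, a i • w i) = ⨆ i, ℓ (a i • w i)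

/-- Two subspaces `V, W` of `(C, ℓ)` are orthogonal if
`ℓ (v + w) = max (ℓ v) (ℓ w)` for all `v ∈ V`, `w ∈ W` (Definition 2.8). -/
def AreOrthogonal {Λ : Type*} [Field Λ] {C : Type*} [AddCommGroup C] [Module Λ C]
    (ℓ : C → EReal) (V W : Submodule Λ C) : Prop :=
  ∀ v ∈ V, ∀ w ∈ W, ℓ (v + w) = max (ℓ v) (ℓ w)

/-- An orthogonalizable `Λ`-space: a finite-dimensional non-Archimedean normed `Λ`-vector
space admitting an orthogonal (finite) basis. -/
def IsOrthogonalizable {Γ : AddSubgroup ℝ} {Λ : Type*} [Field Λ] (NS : NovikovStructure Γ Λ)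
    {C : Type*} [AddCommGroup C] [Module Λ C] (ℓ : C → EReal) : Prop :=
  IsNonArchNorm NS ℓ ∧ ∃ (n : ℕ) (b : Module.Basis (Fin n) Λ C), IsOrthFamily Λ ℓ ⇑b

/-!
Fix an orthogonal basis `b` of `C`. Every subspace `V` has a set `S` of pivot coordinates: on `V`
the filtration only sees the `S`-coordinates, so any vector vanishing on them is orthogonal to
`V`, and every vector agrees on `S` with a vector of `V`. Subtracting the latter from `y` gives
`z ∈ V` with `y - z` orthogonal to `V`. Pivot sets are built one vector at a time, the new pivot
being a coordinate at which the new vector attains its filtration level.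

With this best approximation, an orthogonal basis of `V ≤ W` is extended by appending `y - z`
for `y ∈ W \ V` until it spans `W`; the orthogonal complement of `U` is spanned by the vectors
added when an orthogonal basis of `U` is extended to one of `C`.
-/

section

open Submodule Set

variable {Γ : AddSubgroup ℝ} {Λ : Type*} [Field Λ] {NS : NovikovStructure Γ Λ}

theorem Fin.iSup_univ_castSucc {α : Type*} [CompleteLattice α] {m : ℕ} (F : Fin (m + 1) → α) :
    ⨆ k, F k = (⨆ k : Fin m, F k.castSucc) ⊔ F (Fin.last m) :=
  le_antisymm
    (iSup_le fun k => k.lastCases le_sup_right fun i => le_sup_of_le_left (le_iSup_of_le i le_rfl))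
    (sup_le (iSup_le fun i => le_iSup F i.castSucc) (le_iSup F _))

theorem WellFoundedGT.induction_of_le {α : Type*} [Preorder α] [WellFoundedGT α] {P : α → Prop}
    {a b : α} (hab : a ≤ b) (ha : P a)
    (step : ∀ x ≤ b, x ≠ b → P x → ∃ y, x < y ∧ y ≤ b ∧ P y) : P b :=
  (wellFounded_gt.induction_bot (C := fun x => x ≤ b ∧ P x)
    (fun x hxb ⟨hx, hPx⟩ =>
      let ⟨y, hxy, hy, hPy⟩ := step x hx hxb hPx
      ⟨y, hxy, hy, hPy⟩) ⟨hab, ha⟩).2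

namespace NovikovStructure

theorem ν_one : NS.ν (1 : Λ) = 0 := by
  obtain ⟨g, hg⟩ := NS.ν_mem 1 one_ne_zero
  have h := NS.ν_mul 1 1
  rw [mul_one, hg, ← EReal.coe_add, EReal.coe_eq_coe_iff] at h
  rw [hg, EReal.coe_eq_zero]
  linarith

theorem ν_neg_one : NS.ν (-1 : Λ) = 0 := by
  obtain ⟨g, hg⟩ := NS.ν_mem (-1) (neg_ne_zero.2 one_ne_zero)
  have h := NS.ν_mul (-1) (-1)
  rw [neg_mul_neg, one_mul, ν_one, hg, ← EReal.coe_add, eq_comm, EReal.coe_eq_zero] at h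
  rw [hg, EReal.coe_eq_zero]
  linarith

end NovikovStructure

namespace IsNonArchNorm

variable {C : Type*} [AddCommGroup C] [Module Λ C] {ℓ : C → EReal}

theorem map_zero (hℓ : IsNonArchNorm NS ℓ) : ℓ 0 = ⊥ := (hℓ.eq_bot_iff 0).2 rfl

theorem map_neg (hℓ : IsNonArchNorm NS ℓ) (x : C) : ℓ (-x) = ℓ x := by
  rw [← neg_one_smul Λ x, hℓ.smul_eq, NovikovStructure.ν_neg_one, sub_zero]

theorem map_sub_le (hℓ : IsNonArchNorm NS ℓ) (x y : C) : ℓ (x - y) ≤ max (ℓ x) (ℓ y) := by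
  simpa only [sub_eq_add_neg, hℓ.map_neg] using hℓ.add_le x (-y)

theorem add_eq_max_of_le (hℓ : IsNonArchNorm NS ℓ) {x y : C} (h : ℓ y ≤ ℓ (x + y)) :
    ℓ (x + y) = max (ℓ x) (ℓ y) := by
  refine le_antisymm (hℓ.add_le x y) (max_le ?_ h)
  simpa [max_eq_left h] using hℓ.map_sub_le (x + y) y

theorem restrict (hℓ : IsNonArchNorm NS ℓ) (W : Submodule Λ C) :
    IsNonArchNorm NS fun w : W => ℓ w where
  eq_bot_iff x := (hℓ.eq_bot_iff x).trans Submodule.coe_eq_zero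
  ne_top x := hℓ.ne_top x
  smul_eq a x := hℓ.smul_eq a x
  add_le x y := hℓ.add_le x y

end IsNonArchNorm

variable {C : Type*} [AddCommGroup C] [Module Λ C] {ℓ : C → EReal}

namespace IsOrthFamily

section Basis

variable {ι : Type*} [Fintype ι] {b : Module.Basis ι Λ C}

theorem eq_iSup_repr (hb : IsOrthFamily Λ ℓ b) (x : C) : ℓ x = ⨆ i, ℓ (b.repr x i • b i) := by
  conv_lhs => rw [← b.sum_repr x]
  exact hb _

theorem repr_smul_le (hb : IsOrthFamily Λ ℓ b) (x : C) (i : ι) : ℓ (b.repr x i • b i) ≤ ℓ x :=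
  hb.eq_iSup_repr x ▸ le_iSup (fun i => ℓ (b.repr x i • b i)) i

theorem exists_eq_repr_smul (hℓ : IsNonArchNorm NS ℓ) (hb : IsOrthFamily Λ ℓ b) {x : C}
    (hx : x ≠ 0) : ∃ i, b.repr x i ≠ 0 ∧ ℓ x = ℓ (b.repr x i • b i) := by
  obtain ⟨i, -⟩ : ∃ i, b.repr x i ≠ 0 := by
    by_contra! h
    exact hx (b.ext_elem fun i => by simp [h])
  have : Nonempty ι := ⟨i⟩
  obtain ⟨j, hj⟩ := exists_eq_ciSup_of_finite (f := fun i => ℓ (b.repr x i • b i))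
  rw [← hb.eq_iSup_repr] at hj
  refine ⟨j, fun h0 => hx ?_, hj.symm⟩
  rw [h0, zero_smul, hℓ.map_zero] at hj
  exact (hℓ.eq_bot_iff x).1 hj.symm

end Basis

theorem snoc {m : ℕ} {c : Fin m → C} (hc : IsOrthFamily Λ ℓ c) {y : C}
    (hy : AreOrthogonal ℓ (span Λ (range c)) (Λ ∙ y)) :
    IsOrthFamily Λ ℓ (Fin.snoc c y : Fin (m + 1) → C) := by
  intro a
  rw [Fin.sum_univ_castSucc, Fin.iSup_univ_castSucc]
  simp only [Fin.snoc_castSucc, Fin.snoc_last]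
  rw [hy _ (sum_mem fun k _ => smul_mem _ _ (subset_span (mem_range_self k))) _
    (smul_mem _ _ (mem_span_singleton_self y)), hc]

theorem areOrthogonal_span_image (hℓ : IsNonArchNorm NS ℓ) {ι : Type*} [Fintype ι] {c : ι → C}
    (hc : IsOrthFamily Λ ℓ c) {s t : Set ι} (hst : Disjoint s t) :
    AreOrthogonal ℓ (span Λ (c '' s)) (span Λ (c '' t)) := by
  intro u hu w hw
  obtain ⟨a, ha, rfl⟩ := (Finsupp.mem_span_image_iff_linearCombination Λ).1 hu
  obtain ⟨d, hd, rfl⟩ := (Finsupp.mem_span_image_iff_linearCombination Λ).1 hw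
  have hterm (i : ι) : ℓ ((a i + d i) • c i) = max (ℓ (a i • c i)) (ℓ (d i • c i)) := by
    by_cases hi : i ∈ s
    · simp [(Finsupp.mem_supported' Λ d).1 hd i (hst.notMem_of_mem_left hi), hℓ.map_zero]
    · simp [(Finsupp.mem_supported' Λ a).1 ha i hi, hℓ.map_zero]
  rw [← map_add]
  simp only [Finsupp.linearCombination_apply, Finsupp.sum_fintype, zero_smul, implies_true]
  rw [hc, hc, hc]
  simp only [Finsupp.add_apply, hterm, iSup_sup_eq]

theorem exists_basis_of_span_eq {ι : Type*} [Fintype ι] {c : ι → C} (hc : IsOrthFamily Λ ℓ c)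
    (hli : LinearIndependent Λ c) {W : Submodule Λ C} (hspan : span Λ (range c) = W) :
    ∃ B : Module.Basis ι Λ W, IsOrthFamily Λ (fun w : W => ℓ w) B := by
  refine ⟨(Module.Basis.span hli).map (LinearEquiv.ofEq _ _ hspan), fun a => ?_⟩
  simpa [Module.Basis.span_apply] using hc a

end IsOrthFamily

section PivotSet

variable {ι : Type*}

/-- `S` is a set of pivot coordinates of `V` with respect to `b`, like the pivot columns of a
matrix in reduced row echelon form. -/
structure IsPivotSet (ℓ : C → EReal) (b : Module.Basis ι Λ C) (S : Set ι) (V : Submodule Λ C) :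
    Prop where
  le_iSup_repr : ∀ v ∈ V, ℓ v ≤ ⨆ i ∈ S, ℓ (b.repr v i • b i)
  exists_repr_sub_eq_zero : ∀ y, ∃ z ∈ V, ∀ i ∈ S, b.repr (y - z) i = 0

variable {b : Module.Basis ι Λ C} {S : Set ι} {V : Submodule Λ C}

theorem isPivotSet_bot (hℓ : IsNonArchNorm NS ℓ) : IsPivotSet ℓ b ∅ ⊥ where
  le_iSup_repr v hv := by simp [(mem_bot Λ).1 hv, hℓ.map_zero]
  exists_repr_sub_eq_zero _ := ⟨0, zero_mem _, by simp⟩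

variable [Fintype ι]

namespace IsPivotSet

theorem add_eq_max (hℓ : IsNonArchNorm NS ℓ) (hb : IsOrthFamily Λ ℓ b) (hS : IsPivotSet ℓ b S V)
    {x v : C} (hx : ∀ i ∈ S, b.repr x i = 0) (hv : v ∈ V) : ℓ (x + v) = max (ℓ x) (ℓ v) := by
  refine hℓ.add_eq_max_of_le ((hS.le_iSup_repr v hv).trans (iSup₂_le fun i hi => ?_))
  have : b.repr (x + v) i = b.repr v i := by simp [hx i hi]
  exact this ▸ hb.repr_smul_le (x + v) i

theorem areOrthogonal_span_singleton (hℓ : IsNonArchNorm NS ℓ) (hb : IsOrthFamily Λ ℓ b)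
    (hS : IsPivotSet ℓ b S V) {y : C} (hy : ∀ i ∈ S, b.repr y i = 0) :
    AreOrthogonal ℓ V (Λ ∙ y) := by
  intro v hv w hw
  obtain ⟨a, rfl⟩ := mem_span_singleton.1 hw
  rw [add_comm, max_comm]
  exact hS.add_eq_max hℓ hb (fun i hi => by simp [hy i hi]) hv

theorem insert (hℓ : IsNonArchNorm NS ℓ) (hb : IsOrthFamily Λ ℓ b) (hS : IsPivotSet ℓ b S V)
    {y : C} (hy0 : y ≠ 0) (hy : ∀ i ∈ S, b.repr y i = 0) :
    ∃ j, IsPivotSet ℓ b (insert j S) (V ⊔ Λ ∙ y) := by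
  obtain ⟨j, hj0, hj⟩ := hb.exists_eq_repr_smul hℓ hy0
  refine ⟨j, ⟨fun w hw => ?_, fun x => ?_⟩⟩
  · obtain ⟨v, hv, _, hu, rfl⟩ := mem_sup.1 hw
    obtain ⟨a, rfl⟩ := mem_span_singleton.1 hu
    have hvS : ℓ v ≤ ⨆ i ∈ S, ℓ (b.repr (v + a • y) i • b i) :=
      (hS.le_iSup_repr v hv).trans_eq (biSup_congr fun i hi => by simp [hy i hi])
    have hay : ℓ (a • y) ≤ max (ℓ (b.repr (v + a • y) j • b j)) (ℓ v) := calc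
      ℓ (a • y) = ℓ (b.repr (v + a • y) j • b j - b.repr v j • b j) := by
        rw [hℓ.smul_eq, hj, ← hℓ.smul_eq, smul_smul]
        simp [add_smul]
      _ ≤ max (ℓ (b.repr (v + a • y) j • b j)) (ℓ (b.repr v j • b j)) := hℓ.map_sub_le _ _
      _ ≤ max (ℓ (b.repr (v + a • y) j • b j)) (ℓ v) := max_le_max le_rfl (hb.repr_smul_le v j)
    rw [iSup_insert, hS.areOrthogonal_span_singleton hℓ hb hy v hv _
      (smul_mem _ a (mem_span_singleton_self y))]
    exact max_le (hvS.trans le_sup_right) (hay.trans (max_le le_sup_left (hvS.trans le_sup_right)))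
  · obtain ⟨z, hz, hxz⟩ := hS.exists_repr_sub_eq_zero x
    refine ⟨z + (b.repr (x - z) j / b.repr y j) • y,
      add_mem (mem_sup_left hz) (mem_sup_right (smul_mem _ _ (mem_span_singleton_self y))), ?_⟩
    rintro i (rfl | hi)
    · simp [sub_add_eq_sub_sub, div_mul_cancel₀ _ hj0]
    · simpa [sub_add_eq_sub_sub, hy i hi] using hxz i hi

end IsPivotSet

theorem exists_isPivotSet (hℓ : IsNonArchNorm NS ℓ) (hb : IsOrthFamily Λ ℓ b)
    (W : Submodule Λ C) : ∃ S, IsPivotSet ℓ b S W := by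
  have := Module.Finite.of_basis b
  refine WellFoundedGT.induction_of_le (P := fun U => ∃ S, IsPivotSet ℓ b S U) bot_le
    ⟨∅, isPivotSet_bot hℓ⟩ ?_
  rintro V hVW hne ⟨S, hS⟩
  obtain ⟨y, hyW, hyV⟩ := SetLike.exists_of_lt (lt_of_le_of_ne hVW hne)
  obtain ⟨z, hz, hyz⟩ := hS.exists_repr_sub_eq_zero y
  have hyzV : y - z ∉ V := fun h => hyV (by simpa using add_mem h hz)
  obtain ⟨j, hj⟩ := hS.insert hℓ hb (ne_of_mem_of_not_mem (zero_mem V) hyzV).symm hyz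
  exact ⟨_, left_lt_sup.2 fun h => hyzV (h (mem_span_singleton_self _)),
    sup_le hVW ((span_singleton_le_iff_mem _ _).2 (sub_mem hyW (hVW hz))), _, hj⟩

theorem exists_areOrthogonal_span_sub (hℓ : IsNonArchNorm NS ℓ) (hb : IsOrthFamily Λ ℓ b)
    (V : Submodule Λ C) (y : C) : ∃ z ∈ V, AreOrthogonal ℓ V (Λ ∙ (y - z)) := by
  obtain ⟨S, hS⟩ := exists_isPivotSet hℓ hb V
  obtain ⟨z, hz, hyz⟩ := hS.exists_repr_sub_eq_zero y
  exact ⟨z, hz, hS.areOrthogonal_span_singleton hℓ hb hyz⟩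

end PivotSet

theorem exists_isOrthFamily_extend [FiniteDimensional Λ C]
    (horth : ∀ (V : Submodule Λ C) (y : C), ∃ z ∈ V, AreOrthogonal ℓ V (Λ ∙ (y - z)))
    {V W : Submodule Λ C} (hVW : V ≤ W) {md : ℕ} {b : Fin md → C} (hb : IsOrthFamily Λ ℓ b)
    (hli : LinearIndependent Λ b) (hspan : span Λ (range b) = V) :
    ∃ (nd : ℕ) (h : md ≤ nd) (c : Fin nd → C), IsOrthFamily Λ ℓ c ∧ LinearIndependent Λ c ∧
      span Λ (range c) = W ∧ ∀ j : Fin md, c (Fin.castLE h j) = b j := by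
  refine WellFoundedGT.induction_of_le (P := fun U => ∃ (nd : ℕ) (h : md ≤ nd) (c : Fin nd → C),
      IsOrthFamily Λ ℓ c ∧ LinearIndependent Λ c ∧ span Λ (range c) = U ∧
        ∀ j : Fin md, c (Fin.castLE h j) = b j)
    hVW ⟨md, le_rfl, b, hb, hli, hspan, fun j => rfl⟩ ?_
  rintro U hUW hne ⟨nd, h, c, hc, hli, rfl, hcb⟩
  obtain ⟨y, hyW, hyU⟩ := SetLike.exists_of_lt (lt_of_le_of_ne hUW hne)
  obtain ⟨z, hz, hyz⟩ := horth _ y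
  have hyzU : y - z ∉ span Λ (range c) := fun h => hyU (by simpa using add_mem h hz)
  refine ⟨span Λ (range (Fin.snoc c (y - z))), ?_, ?_, nd + 1, h.trans nd.le_succ, _,
    hc.snoc hyz, hli.finSnoc hyzU, rfl, fun j => ?_⟩
  · rw [Fin.range_snoc, span_insert]
    exact right_lt_sup.2 fun h => hyzU (h (mem_span_singleton_self _))
  · rw [Fin.range_snoc, span_insert]
    exact sup_le ((span_singleton_le_iff_mem _ _).2 (sub_mem hyW (hUW hz))) hUW
  · rw [← hcb j]
    exact Fin.snoc_castSucc (α := fun _ => C) _ _ (Fin.castLE h j)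

end

/-- Corollaries 2.17, 2.18, 2.19: in an orthogonalizable `Λ`-space `(C,ℓ)`:
(1) every subspace `W` with the restricted filtration is an orthogonalizable `Λ`-space;
(2) for `V ≤ W ≤ C`, any orthogonal ordered basis of `V` extends to an orthogonal ordered
basis of `W`; (3) every subspace `U` admits an orthogonal complement `V` (so `U ⊕ V = C`
with `U`, `V` orthogonal). -/
theorem orthogonalizable_subspace_extend_complement
    {Γ : AddSubgroup ℝ} {Λ : Type*} [Field Λ] (NS : NovikovStructure Γ Λ)
    {C : Type*} [AddCommGroup C] [Module Λ C] {ℓ : C → EReal}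
    (hC : IsOrthogonalizable NS ℓ) :
    (∀ W : Submodule Λ C, IsOrthogonalizable NS fun w : ↥W => ℓ (w : C)) ∧
    (∀ V W : Submodule Λ C, V ≤ W → ∀ (md : ℕ) (b : Fin md → C),
      IsOrthFamily Λ ℓ b → LinearIndependent Λ b → Submodule.span Λ (Set.range b) = V →
      ∃ (nd : ℕ) (h : md ≤ nd) (c : Fin nd → C),
        IsOrthFamily Λ ℓ c ∧ LinearIndependent Λ c ∧
        Submodule.span Λ (Set.range c) = W ∧
        ∀ j : Fin md, c (Fin.castLE h j) = b j) ∧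
    (∀ U : Submodule Λ C, ∃ V : Submodule Λ C, IsCompl U V ∧ AreOrthogonal ℓ U V) := by
  obtain ⟨hℓ, n, b, hb⟩ := hC
  have := Module.Finite.of_basis b
  have horth := exists_areOrthogonal_span_sub hℓ hb
  have exists_family (W : Submodule Λ C) : ∃ (m : ℕ) (c : Fin m → C),
      IsOrthFamily Λ ℓ c ∧ LinearIndependent Λ c ∧ Submodule.span Λ (Set.range c) = W := by
    obtain ⟨m, -, c, hc, hli, hspan, -⟩ := exists_isOrthFamily_extend horth (bot_le (a := W))
      (b := Fin.elim0) (fun a => by simp [hℓ.map_zero]) linearIndependent_empty_type (by simp)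
    exact ⟨m, c, hc, hli, hspan⟩
  refine ⟨fun W => ?_, fun _ _ hVW _ _ => exists_isOrthFamily_extend horth hVW, fun U => ?_⟩
  · obtain ⟨m, c, hc, hli, hspan⟩ := exists_family W
    obtain ⟨B, hB⟩ := hc.exists_basis_of_span_eq hli hspan
    exact ⟨hℓ.restrict W, m, B, hB⟩
  · obtain ⟨m, c, hc, hli, hspan⟩ := exists_family U
    obtain ⟨nd, h, c', hc', hli', hspan', hc'c⟩ :=
      exists_isOrthFamily_extend horth le_top hc hli hspan
    have hU : U = Submodule.span Λ (c' '' Set.range (Fin.castLE h)) := by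
      rw [← hspan, ← Set.range_comp, Function.comp_def, funext hc'c]
    rw [hU]
    exact ⟨_, hli'.isCompl_span_image hspan' isCompl_compl,
      hc'.areOrthogonal_span_image hℓ disjoint_compl_right⟩
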